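/- arXiv:2209.11229 — 4 statements merged into one kernel-verified Lean document; each statement's English description precedes it below -/
import Mathlib

section
/- If a graph G has maximum degree at most d, then for every positive integer p, the vertex set of G can be partitioned into at most d^p + 1 parts such that the union of any p parts induces a subgraph all of whose connected components have at most p vertices. -/
/-!
Every vertex has at most `d ^ p` vertices within distance `p` of it, so the `p`-th power `G^p`
has a proper colouring with `d ^ p + 1` colours (greedily). Let `x ≠ y` be in one component of
the subgraph induced by `p` colour classes, joined there by a path. Its first `min(length, p) + 1`
vertices are pairwise within distance `p`, so they get distinct colours among the `p` allowed
ones; hence the path has length less than `p`, and `x`, `y` are adjacent in `G^p` and coloured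
differently. So the colouring is injective on each component, which has at most `p` vertices.
-/

open Finset

namespace SimpleGraph

variable {V : Type*} {G : SimpleGraph V} {p : ℕ}

theorem colorable_of_degree_le [Fintype V] [DecidableRel G.Adj] {D : ℕ}
    (hD : ∀ v, G.degree v ≤ D) : G.Colorable (D + 1) := by
  classical
  suffices ∀ s : Finset V, ∃ c : V → Fin (D + 1), ∀ u ∈ s, ∀ v ∈ s, G.Adj u v → c u ≠ c v by
    obtain ⟨c, hc⟩ := this univ
    exact ⟨Coloring.mk c fun {u v} huv => hc u (mem_univ u) v (mem_univ v) huv⟩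
  intro s
  induction s using Finset.induction_on with
  | empty => exact ⟨0, by simp⟩
  | insert a s ha ih =>
    obtain ⟨c, hc⟩ := ih
    have hfree : #((G.neighborFinset a).image c) < #(univ : Finset (Fin (D + 1))) := by
      simpa using card_image_le.trans_lt ((hD a).trans_lt (lt_add_one D))
    obtain ⟨k, -, hk⟩ := exists_mem_notMem_of_card_lt_card hfree
    have hne_of_mem {v : V} (hv : v ∈ s) : a ≠ v := fun h => ha (h ▸ hv)
    have hnew : ∀ v ∈ s, G.Adj a v → Function.update c a k a ≠ Function.update c a k v :=
      fun v hv hav => by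
        rw [Function.update_self, Function.update_of_ne (hne_of_mem hv).symm]
        exact fun hkv => hk (hkv ▸ mem_image_of_mem c ((mem_neighborFinset G a v).2 hav))
    refine ⟨Function.update c a k, fun u hu v hv huv => ?_⟩
    rcases mem_insert.1 hu with rfl | hu <;> rcases mem_insert.1 hv with hva | hv
    · exact absurd hva.symm huv.ne
    · exact hnew v hv huv
    · exact hva ▸ (hnew u hu (hva ▸ huv.symm)).symm
    · rw [Function.update_of_ne (hne_of_mem hu).symm, Function.update_of_ne (hne_of_mem hv).symm]
      exact hc u hu v hv huv

def power (G : SimpleGraph V) (p : ℕ) : SimpleGraph V where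
  Adj u v := u ≠ v ∧ ∃ w : G.Walk u v, w.length ≤ p
  symm := ⟨fun _ _ ⟨hne, w, hw⟩ => ⟨hne.symm, w.reverse, by simpa using hw⟩⟩
  loopless := ⟨fun _ h => h.1 rfl⟩

@[simp]
theorem power_adj {u v : V} :
    (G.power p).Adj u v ↔ u ≠ v ∧ ∃ w : G.Walk u v, w.length ≤ p := Iff.rfl

theorem power_one : G.power 1 = G := by
  ext u v
  refine ⟨fun ⟨huv, w, hw⟩ => ?_, fun h => ⟨h.ne, h.toWalk, by simp⟩⟩
  rcases Nat.le_one_iff_eq_zero_or_eq_one.1 hw with hw | hw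
  · exact absurd (Walk.eq_of_length_eq_zero hw) huv
  · exact Walk.adj_of_length_eq_one hw

theorem degree_power_le [Fintype V] [DecidableRel G.Adj] {d : ℕ} (hd : ∀ v, G.degree v ≤ d)
    [hdec : DecidableRel (G.power p).Adj] (v : V) : (G.power p).degree v ≤ d ^ p := by
  rcases Nat.eq_zero_or_pos p with rfl | hp
  · refine (card_eq_zero.2 (eq_empty_of_forall_notMem fun w hw => ?_)).trans_le (Nat.zero_le _)
    obtain ⟨hvw, wk, hlen⟩ := (mem_neighborFinset _ _ _).1 hw
    exact hvw (Walk.eq_of_length_eq_zero (Nat.le_zero.1 hlen))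
  induction p, hp using Nat.le_induction generalizing hdec v with
  | base =>
    rw [pow_one]
    refine (card_le_card fun w hw => ?_).trans (hd v)
    simpa [power_one] using hw
  | succ q hq ih =>
    classical
    have hcover : (G.power (q + 1)).neighborFinset v ⊆ (G.neighborFinset v).biUnion
        fun u => (insert u ((G.power q).neighborFinset u)).erase v := by
      intro w hw
      obtain ⟨hvw, wk, hlen⟩ := (mem_neighborFinset _ _ _).1 hw
      cases wk with
      | nil => exact absurd rfl hvw
      | @cons _ u _ hvu r =>
        refine mem_biUnion.2 ⟨u, (mem_neighborFinset _ _ _).2 hvu, mem_erase.2 ⟨hvw.symm, ?_⟩⟩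
        by_cases huw : u = w
        · exact huw ▸ mem_insert_self u _
        · exact mem_insert_of_mem ((mem_neighborFinset _ _ _).2 ⟨huw, r, by simpa using hlen⟩)
    -- `v` lies in the `q`-ball of its neighbour `u`; discarding it pays for adding `u` itself.
    have hbranch : ∀ u ∈ G.neighborFinset v,
        #((insert u ((G.power q).neighborFinset u)).erase v) ≤ d ^ q := by
      intro u hu
      have hvu := (mem_neighborFinset _ _ _).1 hu
      have hv : v ∈ insert u ((G.power q).neighborFinset u) := mem_insert_of_mem <|
        (mem_neighborFinset _ _ _).2 ⟨hvu.ne', hvu.symm.toWalk, by simpa using hq⟩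
      have hins := card_insert_le u ((G.power q).neighborFinset u)
      have hdeg := card_neighborFinset_eq_degree (G.power q) u ▸ ih u
      rw [card_erase_of_mem hv]
      omega
    calc (G.power (q + 1)).degree v
        ≤ ∑ u ∈ G.neighborFinset v, #((insert u ((G.power q).neighborFinset u)).erase v) :=
          (card_le_card hcover).trans card_biUnion_le
      _ ≤ G.degree v * d ^ q := by simpa using sum_le_sum hbranch
      _ ≤ d ^ (q + 1) := by rw [pow_succ']; exact Nat.mul_le_mul_right _ (hd v)

theorem Walk.IsPath.power_adj_getVert {u v : V} {q : G.Walk u v} (hq : q.IsPath) {i j : ℕ}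
    (hij : i < j) (hj : j ≤ q.length) (hji : j ≤ i + p) :
    (G.power p).Adj (q.getVert i) (q.getVert j) := by
  refine ⟨fun h => hij.ne (hq.getVert_injOn (show i ≤ q.length by omega) hj h), ?_⟩
  refine ⟨((q.drop i).take (j - i)).copy rfl (by rw [drop_getVert, Nat.add_sub_cancel' hij.le]),
    ?_⟩
  simp only [Walk.length_copy, Walk.take_length, Walk.drop_length]
  omega

theorem Coloring.injOn_supp_induce_power {α : Type*} (C : (G.power p).Coloring α) {I : Finset α}
    (hI : #I ≤ p) (K : (G.induce {v | C v ∈ I}).ConnectedComponent) :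
    Set.InjOn (fun x => C x.1) K.supp := by
  intro x hx y hy hxy
  by_contra hne
  obtain ⟨q, hq⟩ := (K.reachable_of_mem_supp hx hy).exists_isPath
  set q' := q.map (Embedding.induce {v | C v ∈ I}).toHom with hq'_def
  have hq' : q'.IsPath := hq.map Subtype.val_injective
  have hlen : 0 < q'.length := Nat.pos_of_ne_zero fun h =>
    hne (Walk.eq_of_length_eq_zero (p := q) (by rwa [hq'_def, Walk.length_map] at h))
  set m := min q'.length p
  have hclique :
      Pairwise fun i j : Fin (m + 1) => (G.power p).Adj (q'.getVert i) (q'.getVert j) := by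
    intro i j hij
    rcases lt_or_gt_of_ne (Fin.val_injective.ne hij) with h | h
    · exact hq'.power_adj_getVert h (by omega) (by omega)
    · exact (hq'.power_adj_getVert h (by omega) (by omega)).symm
  have hcolors : m + 1 ≤ #I := by
    simpa using card_le_card_of_injOn (s := univ) (fun i : Fin (m + 1) => C (q'.getVert i))
      (fun i _ => by simp only [hq'_def, Walk.getVert_map]; exact (q.getVert i).2)
      (C.injective_comp_of_pairwise_adj _ hclique).injOn
  have hadj := hq'.power_adj_getVert (p := p) (i := 0) (j := q'.length) hlen le_rfl (by omega)
  rw [Walk.getVert_zero, Walk.getVert_length] at hadj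
  exact C.valid hadj hxy

theorem Coloring.ncard_supp_induce_power_le {α : Type*} (C : (G.power p).Coloring α)
    {I : Finset α} (hI : #I ≤ p) (K : (G.induce {v | C v ∈ I}).ConnectedComponent) :
    K.supp.ncard ≤ p :=
  calc K.supp.ncard = ((fun x => C x.1) '' K.supp).ncard :=
        (C.injOn_supp_induce_power hI K).ncard_image.symm
    _ ≤ (I : Set α).ncard := Set.ncard_le_ncard (by rintro _ ⟨x, -, rfl⟩; exact x.2) I.finite_toSet
    _ = #I := Set.ncard_coe_finset I
    _ ≤ p := hI

end SimpleGraph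

theorem statement4_general {V : Type} [Fintype V] (G : SimpleGraph V) [DecidableRel G.Adj]
    (d p : ℕ) (hd : ∀ v, G.degree v ≤ d) :
    ∃ c : V → Fin (d ^ p + 1), ∀ I : Finset (Fin (d ^ p + 1)), I.card ≤ p →
      ∀ K : (G.induce {v | c v ∈ I}).ConnectedComponent, K.supp.ncard ≤ p := by
  classical
  obtain ⟨C⟩ := SimpleGraph.colorable_of_degree_le (SimpleGraph.degree_power_le hd)
  exact ⟨C, fun I hI K => C.ncard_supp_induce_power_le hI K⟩

theorem statement4 {V : Type} [Fintype V] (G : SimpleGraph V) [DecidableRel G.Adj]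
    (d p : ℕ) (hp : 0 < p) (hd : ∀ v, G.degree v ≤ d) :
    ∃ c : V → Fin (d ^ p + 1), ∀ I : Finset (Fin (d ^ p + 1)), I.card ≤ p →
      ∀ K : (G.induce {v | c v ∈ I}).ConnectedComponent, K.supp.ncard ≤ p :=
  statement4_general G d p hd
end

section
/- (Kővári–Sós–Turán) For all integers t ≥ s ≥ 2, every graph on n vertices with no subgraph isomorphic to K_{s,t} has at most (1/2)(t−1)^{1/s} n^{2−1/s} + (1/2)(s−1) n edges. -/
/-- `G` contains the complete bipartite graph `K_{s,t}` as a (not necessarily induced)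
subgraph. -/
def ContainsBiclique {V : Type} (G : SimpleGraph V) (s t : ℕ) : Prop :=
  ∃ A B : Finset V, A.card = s ∧ B.card = t ∧ Disjoint A B ∧
    ∀ a ∈ A, ∀ b ∈ B, G.Adj a b

open Finset Classical

lemma castSubLe' (a b : ℕ) : (a:ℝ) - b ≤ ((a - b : ℕ):ℝ) := by
  rcases le_total b a with h | h
  · rw [Nat.cast_sub h]
  · have h1 : a - b = 0 := by omega
    have h2 : (a:ℝ) ≤ b := by exact_mod_cast h
    rw [h1]; push_cast; linarith

theorem statement7 (s t n : ℕ) (hs : 2 ≤ s) (hst : s ≤ t)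
    {V : Type} [Fintype V] (G : SimpleGraph V) [DecidableRel G.Adj]
    (hn : Fintype.card V = n) (h : ¬ ContainsBiclique G s t) :
    (G.edgeFinset.card : ℝ) ≤
      (1 / 2) * ((t : ℝ) - 1) ^ ((1 : ℝ) / s) * (n : ℝ) ^ (2 - (1 : ℝ) / s)
        + (1 / 2) * ((s : ℝ) - 1) * n := by
  have hs0 : (s : ℝ) ≠ 0 := by positivity
  have ht1 : (1 : ℕ) ≤ t := by omega
  -- Step 1: each s-set has at most t-1 common neighbors
  have step1 : ∀ S : Finset V, S.card = s →
      (univ.filter (fun v => S ⊆ G.neighborFinset v)).card ≤ t - 1 := by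
    intro S hS
    by_contra hc
    push_neg at hc
    have hc' : t ≤ (univ.filter (fun v => S ⊆ G.neighborFinset v)).card := by omega
    obtain ⟨B, hBsub, hBcard⟩ := Finset.exists_subset_card_eq hc'
    apply h
    refine ⟨S, B, hS, hBcard, ?_, ?_⟩
    · rw [Finset.disjoint_left]
      intro x hxS hxB
      have hx := (Finset.mem_filter.mp (hBsub hxB)).2 hxS
      rw [SimpleGraph.mem_neighborFinset] at hx
      exact G.irrefl hx
    · intro a haS b hbB
      have hx := (Finset.mem_filter.mp (hBsub hbB)).2 haS
      rw [SimpleGraph.mem_neighborFinset] at hx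
      exact hx.symm
  -- Step 2: double counting
  have step2 : ∑ v : V, (G.degree v).choose s ≤ (t - 1) * n.choose s := by
    have h1 : ∀ v : V, (G.degree v).choose s
        = ((univ.powersetCard s).filter (fun S => S ⊆ G.neighborFinset v)).card := by
      intro v
      rw [show G.degree v = (G.neighborFinset v).card from rfl, ← Finset.card_powersetCard]
      congr 1
      ext S
      simp only [Finset.mem_powersetCard, Finset.mem_filter, Finset.subset_univ, true_and]
      tauto
    calc ∑ v : V, (G.degree v).choose s
        = ∑ S ∈ (univ : Finset V).powersetCard s,
            (univ.filter (fun v => S ⊆ G.neighborFinset v)).card := by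
          simp_rw [h1, Finset.card_filter]; rw [Finset.sum_comm]
      _ ≤ ∑ S ∈ (univ : Finset V).powersetCard s, (t - 1) := by
          refine Finset.sum_le_sum fun S hS => step1 S ?_
          exact (Finset.mem_powersetCard.mp hS).2
      _ = (t - 1) * n.choose s := by
          rw [Finset.sum_const, smul_eq_mul, Finset.card_powersetCard, card_univ, hn,
            mul_comm]
  -- Step 3: nat inequality on powers
  have step3 : ∑ v : V, (G.degree v + 1 - s) ^ s ≤ (t - 1) * n ^ s := by
    calc ∑ v : V, (G.degree v + 1 - s) ^ s
        ≤ ∑ v : V, (G.degree v).descFactorial s :=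
          Finset.sum_le_sum fun v _ => Nat.pow_sub_le_descFactorial _ _
      _ = ∑ v : V, Nat.factorial s * (G.degree v).choose s := by
          simp_rw [Nat.descFactorial_eq_factorial_mul_choose]
      _ = Nat.factorial s * ∑ v : V, (G.degree v).choose s := by rw [Finset.mul_sum]
      _ ≤ Nat.factorial s * ((t - 1) * n.choose s) := Nat.mul_le_mul_left _ step2
      _ = (t - 1) * (Nat.factorial s * n.choose s) := by ring
      _ = (t - 1) * n.descFactorial s := by rw [Nat.descFactorial_eq_factorial_mul_choose]
      _ ≤ (t - 1) * n ^ s := Nat.mul_le_mul_left _ (Nat.descFactorial_le_pow _ _)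
  -- move to ℝ
  set m : ℝ := (G.edgeFinset.card : ℝ) with hm
  set a : V → ℝ := fun v => ((G.degree v + 1 - s : ℕ) : ℝ) with ha
  have ha0 : ∀ v ∈ (univ : Finset V), 0 ≤ a v := fun v _ => Nat.cast_nonneg _
  have hsum_deg : ∑ v : V, (G.degree v : ℝ) = 2 * m := by
    rw [hm]
    exact_mod_cast G.sum_degrees_eq_twice_card_edges
  have hav : ∀ v : V, (G.degree v : ℝ) - ((s : ℝ) - 1) ≤ a v := by
    intro v
    have : ((G.degree v + 1 : ℕ) : ℝ) - (s : ℝ) ≤ ((G.degree v + 1 - s : ℕ) : ℝ) := by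
      exact castSubLe' (G.degree v + 1) s
    push_cast at this ⊢
    linarith
  have hS1 : 2 * m - ((s : ℝ) - 1) * n ≤ ∑ v : V, a v := by
    have : ∑ v : V, ((G.degree v : ℝ) - ((s : ℝ) - 1)) ≤ ∑ v : V, a v :=
      Finset.sum_le_sum fun v _ => hav v
    rw [Finset.sum_sub_distrib, hsum_deg, Finset.sum_const, card_univ, hn] at this
    rw [nsmul_eq_mul] at this
    linarith
  have hpow : ∑ v : V, a v ^ s ≤ ((t : ℝ) - 1) * (n : ℝ) ^ s := by
    have := step3
    have h' : ((∑ v : V, (G.degree v + 1 - s) ^ s : ℕ) : ℝ) ≤ (((t - 1) * n ^ s : ℕ) : ℝ) :=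
      Nat.cast_le.mpr this
    push_cast [Nat.cast_sub (by omega : 1 ≤ t)] at h'
    convert h' using 2
  set X : ℝ := 2 * m - ((s : ℝ) - 1) * n with hX
  have htnn : (0 : ℝ) ≤ (t : ℝ) - 1 := by
    have : (1 : ℝ) ≤ t := by exact_mod_cast ht1
    linarith
  have hT0 : 0 ≤ (1 / 2) * ((t : ℝ) - 1) ^ ((1 : ℝ) / s) * (n : ℝ) ^ (2 - (1 : ℝ) / s) := by
    apply mul_nonneg (mul_nonneg (by norm_num) (Real.rpow_nonneg htnn _))
      (Real.rpow_nonneg (Nat.cast_nonneg _) _)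
  by_cases hXpos : X ≤ 0
  · have : m ≤ (1 / 2) * ((s : ℝ) - 1) * n := by rw [hX] at hXpos; linarith
    linarith
  push_neg at hXpos
  -- n ≥ 1
  have hn1 : 1 ≤ n := by
    by_contra hn0
    have hn0' : n = 0 := by omega
    have : (Fintype.card V : ℝ) = 0 := by rw [hn, hn0']; norm_num
    have hm0 : (2 : ℝ) * m = 0 := by
      rw [← hsum_deg]
      have : (univ : Finset V) = ∅ := by
        rw [← Finset.card_eq_zero, card_univ, hn, hn0']
      rw [this, Finset.sum_empty]
    rw [hX, hn0'] at hXpos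
    push_cast at hXpos
    linarith
  have hnpos : (0 : ℝ) < n := by exact_mod_cast hn1
  -- power mean
  have hpm : (∑ v : V, a v) ^ s / (n : ℝ) ^ (s - 1) ≤ ∑ v : V, a v ^ s := by
    have := pow_sum_div_card_le_sum_pow (s := (univ : Finset V)) (f := a) ha0 (s - 1)
    rwa [card_univ, hn, Nat.sub_add_cancel (by omega : 1 ≤ s)] at this
  have hXS : X ≤ ∑ v : V, a v := hS1
  have hXs : X ^ s ≤ ((t : ℝ) - 1) * (n : ℝ) ^ (2 * s - 1) := by
    have h1 : X ^ s ≤ (∑ v : V, a v) ^ s :=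
      pow_le_pow_left₀ (le_of_lt hXpos) hXS s
    have h2 : (∑ v : V, a v) ^ s ≤ (∑ v : V, a v ^ s) * (n : ℝ) ^ (s - 1) := by
      rw [div_le_iff₀ (by positivity)] at hpm
      exact hpm
    have h3 : (∑ v : V, a v ^ s) * (n : ℝ) ^ (s - 1)
        ≤ ((t : ℝ) - 1) * (n : ℝ) ^ s * (n : ℝ) ^ (s - 1) := by
      apply mul_le_mul_of_nonneg_right hpow (by positivity)
    have h4 : ((t : ℝ) - 1) * (n : ℝ) ^ s * (n : ℝ) ^ (s - 1)
        = ((t : ℝ) - 1) * (n : ℝ) ^ (2 * s - 1) := by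
      rw [mul_assoc, ← pow_add]
      congr 2
      omega
    linarith
  -- take s-th roots
  have hroot : X ≤ ((t : ℝ) - 1) ^ ((1 : ℝ) / s) * (n : ℝ) ^ (2 - (1 : ℝ) / s) := by
    have hXsn : (0 : ℝ) ≤ X ^ s := by positivity
    have hkey : (X ^ s) ^ ((s : ℝ)⁻¹) ≤ (((t : ℝ) - 1) * (n : ℝ) ^ (2 * s - 1)) ^ ((s : ℝ)⁻¹) :=
      Real.rpow_le_rpow hXsn hXs (by positivity)
    rw [Real.pow_rpow_inv_natCast (le_of_lt hXpos) (by omega)] at hkey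
    rw [Real.mul_rpow htnn (by positivity)] at hkey
    have hnr : ((n : ℝ) ^ (2 * s - 1)) ^ ((s : ℝ)⁻¹) = (n : ℝ) ^ (2 - (1 : ℝ) / s) := by
      rw [← Real.rpow_natCast (n : ℝ) (2 * s - 1), ← Real.rpow_mul (le_of_lt hnpos)]
      congr 1
      have : ((2 * s - 1 : ℕ) : ℝ) = 2 * (s : ℝ) - 1 := by
        push_cast [Nat.cast_sub (by omega : 1 ≤ 2 * s)]
        ring
      rw [this]
      field_simp
    rw [hnr] at hkey
    rw [one_div]
    convert hkey using 3
    rw [one_div]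
  rw [hX] at hroot
  linarith
end

section
/- Suppose a hereditary class C has quasi-bounded-size weakly-sparse decompositions with parameter 2: there is a weakly sparse hereditary class D such that for every ε > 0 and all sufficiently large n, every n-vertex graph in C admits a partition into at most n^ε parts with every union of 2 parts inducing a subgraph in D. Then C is weakly sparse, i.e., there is t such that no graph in C contains K_{t,t} as a subgraph. -/
/-- A class of (finite) graphs: a predicate on graphs over arbitrary vertex types. -/
def GraphClass : Type 1 :=
  ∀ (V : Type), SimpleGraph V → Prop

/-- `D'` is a subclass of `D`. -/
def Subclass (D' D : GraphClass) : Prop :=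
  ∀ (V : Type) (G : SimpleGraph V), D' V G → D V G

/-- A class is hereditary if it is closed under induced subgraphs. -/
def Hereditary (D : GraphClass) : Prop :=
  ∀ (V : Type) (G : SimpleGraph V) (s : Set V), D V G → D ↥s (G.induce s)

/-- A hereditary class property: a downset of hereditary graph classes. -/
def IsHereditaryProperty (P : Set GraphClass) : Prop :=
  (∀ D ∈ P, Hereditary D) ∧
  ∀ D ∈ P, ∀ D' : GraphClass, Hereditary D' → Subclass D' D → D' ∈ P

/-- `C` has an `f`-bounded `P`-decomposition with parameter `p`: there is `D ∈ P` such
that every finite graph `G ∈ C` admits a partition of its vertex set into at most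
`f (|G|)` parts (given by a coloring), the union of any `p` parts inducing a subgraph
in `D`. -/
def HasDecomp (C : GraphClass) (P : Set GraphClass) (f : ℕ → ℕ) (p : ℕ) : Prop :=
  ∃ D ∈ P, ∀ (V : Type), Finite V → ∀ G : SimpleGraph V, C V G →
    ∃ N : ℕ, N ≤ f (Nat.card V) ∧ ∃ c : V → Fin N,
      ∀ I : Finset (Fin N), I.card ≤ p →
        D ↥{v | c v ∈ I} (G.induce {v | c v ∈ I})

/-- A class is weakly sparse (biclique-free) if some `K_{t,t}` occurs as a subgraph of
no graph in the class. -/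
def WeaklySparse (D : GraphClass) : Prop :=
  ∃ t : ℕ, 0 < t ∧ ∀ (V : Type), Finite V → ∀ G : SimpleGraph V, D V G →
    ¬ ContainsBiclique G t t

theorem statement9 (C : GraphClass) (hC : Hereditary C)
    (D : GraphClass) (hD : Hereditary D) (hDs : WeaklySparse D)
    (h : ∀ ε : ℝ, 0 < ε → ∃ n₀ : ℕ, ∀ (V : Type), Finite V → ∀ G : SimpleGraph V,
      C V G → n₀ ≤ Nat.card V →
        ∃ N : ℕ, (N : ℝ) ≤ (Nat.card V : ℝ) ^ ε ∧
          ∃ c : V → Fin N, ∀ I : Finset (Fin N), I.card ≤ 2 →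
            D ↥{v | c v ∈ I} (G.induce {v | c v ∈ I})) :
    WeaklySparse C := by
  classical
  obtain ⟨t₀, ht₀, hfree⟩ := hDs
  obtain ⟨n₀, hdec⟩ := h (1 / 2) (by norm_num)
  refine ⟨max n₀ (2 * t₀ ^ 2), lt_of_lt_of_le (by positivity) (le_max_right _ _), ?_⟩
  set t := max n₀ (2 * t₀ ^ 2) with ht_def
  have htn₀ : n₀ ≤ t := le_max_left _ _
  have htt₀ : 2 * t₀ ^ 2 ≤ t := le_max_right _ _
  have htpos : 0 < t := lt_of_lt_of_le (by positivity) htt₀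
  intro V _ G hG hbic
  obtain ⟨A, B, hA, hB, hAB, hadj⟩ := hbic
  set s : Set V := ↑(A ∪ B) with hs
  have hcards : Nat.card ↥s = 2 * t := by
    rw [Nat.card_coe_set_eq, Set.ncard_coe_finset, Finset.card_union_of_disjoint hAB, hA, hB]
    ring
  obtain ⟨N, hN, c, hc⟩ := hdec ↥s (by infer_instance) (G.induce s) (hC V G s hG)
    (by omega)
  -- N^2 ≤ 2t
  have hN2 : N ^ 2 ≤ 2 * t := by
    have h2t : (0 : ℝ) ≤ ((2 * t : ℕ) : ℝ) := by positivity
    rw [hcards] at hN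
    rw [← Real.sqrt_eq_rpow] at hN
    have := (Real.le_sqrt (by positivity) h2t).mp hN
    exact_mod_cast this
  have hNt₀ : N * t₀ ≤ t := by
    have hsq : (N * t₀) ^ 2 ≤ t ^ 2 := by
      calc (N * t₀) ^ 2 = N ^ 2 * t₀ ^ 2 := by ring
        _ ≤ (2 * t) * t₀ ^ 2 := Nat.mul_le_mul_right _ hN2
        _ = (2 * t₀ ^ 2) * t := by ring
        _ ≤ t * t := Nat.mul_le_mul_right _ htt₀
        _ = t ^ 2 := by ring
    exact (Nat.pow_le_pow_iff_left (by norm_num)).mp hsq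
  -- lift A and B to finsets of ↥s
  have hAs : ∀ v ∈ A, v ∈ s := fun v hv => by
    simp [hs, Finset.mem_union, hv]
  have hBs : ∀ v ∈ B, v ∈ s := fun v hv => by
    simp [hs, Finset.mem_union, hv]
  set As : Finset ↥s := A.subtype (· ∈ s) with hAs_def
  set Bs : Finset ↥s := B.subtype (· ∈ s) with hBs_def
  have hAscard : As.card = t := by
    have := Finset.subtype_map_of_mem (p := (· ∈ s)) hAs
    calc As.card = (As.map (Function.Embedding.subtype _)).card :=
          (Finset.card_map _).symm
      _ = A.card := by rw [this]
      _ = t := hA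
  have hBscard : Bs.card = t := by
    have := Finset.subtype_map_of_mem (p := (· ∈ s)) hBs
    calc Bs.card = (Bs.map (Function.Embedding.subtype _)).card :=
          (Finset.card_map _).symm
      _ = B.card := by rw [this]
      _ = t := hB
  -- N > 0 since ↥s is nonempty
  have hsne : Nonempty ↥s := by
    have : 0 < Nat.card ↥s := by omega
    exact (Nat.card_pos_iff.mp this).1
  have : Nonempty (Fin N) := ⟨c hsne.some⟩
  -- pigeonhole: a color class containing ≥ t₀ elements of As, resp. Bs
  obtain ⟨i, -, hi⟩ := Finset.exists_le_card_fiber_of_mul_le_card_of_maps_to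
    (f := c) (t := Finset.univ) (fun a _ => Finset.mem_univ (c a))
    Finset.univ_nonempty (by rw [Finset.card_univ, Fintype.card_fin, hAscard]; exact hNt₀)
  obtain ⟨j, -, hj⟩ := Finset.exists_le_card_fiber_of_mul_le_card_of_maps_to
    (f := c) (t := Finset.univ) (fun b _ => Finset.mem_univ (c b))
    Finset.univ_nonempty (by rw [Finset.card_univ, Fintype.card_fin, hBscard]; exact hNt₀)
  obtain ⟨A₂, hA₂sub, hA₂card⟩ := Finset.exists_subset_card_eq hi
  obtain ⟨B₂, hB₂sub, hB₂card⟩ := Finset.exists_subset_card_eq hj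
  set I : Finset (Fin N) := {i, j} with hI_def
  have hIcard : I.card ≤ 2 := (Finset.card_insert_le _ _).trans (by simp)
  have hDmem := hc I hIcard
  -- members of A₂, B₂ have colors in I
  have hA₂mem : ∀ a ∈ A₂, c a ∈ I ∧ (a : V) ∈ A := fun a ha => by
    have := hA₂sub ha
    rw [Finset.mem_filter, hAs_def, Finset.mem_subtype] at this
    exact ⟨by simp [hI_def, this.2], this.1⟩
  have hB₂mem : ∀ b ∈ B₂, c b ∈ I ∧ (b : V) ∈ B := fun b hb => by
    have := hB₂sub hb
    rw [Finset.mem_filter, hBs_def, Finset.mem_subtype] at this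
    exact ⟨by simp [hI_def, this.2], this.1⟩
  refine hfree ↥{v | c v ∈ I} (by infer_instance) _ hDmem ?_
  refine ⟨A₂.subtype (fun v => c v ∈ I),
          B₂.subtype (fun v => c v ∈ I), ?_, ?_, ?_, ?_⟩
  · calc (A₂.subtype _).card
        = ((A₂.subtype (fun v => c v ∈ I)).map
            (Function.Embedding.subtype _)).card := (Finset.card_map _).symm
      _ = A₂.card := by
          rw [Finset.subtype_map_of_mem (fun a ha => (hA₂mem a ha).1)]
      _ = t₀ := hA₂card
  · calc (B₂.subtype _).card
        = ((B₂.subtype (fun v => c v ∈ I)).map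
            (Function.Embedding.subtype _)).card := (Finset.card_map _).symm
      _ = B₂.card := by
          rw [Finset.subtype_map_of_mem (fun b hb => (hB₂mem b hb).1)]
      _ = t₀ := hB₂card
  · rw [Finset.disjoint_left]
    intro x hx hx'
    rw [Finset.mem_subtype] at hx hx'
    exact Finset.disjoint_left.mp hAB ((hA₂mem _ hx).2) ((hB₂mem _ hx').2)
  · intro a ha b hb
    rw [Finset.mem_subtype] at ha hb
    exact hadj _ (hA₂mem _ ha).2 _ (hB₂mem _ hb).2
end

section
/- The class property Δ_k = 'some deletion of at most k vertices leaves a graph of bounded maximum degree' is closed under quasi-bounded-size decompositions: if a hereditary class C has, for each parameter p, a quasi-bounded-size decomposition over a class in Δ_k, then C ∈ Δ_k. -/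
/-- `f` is quasi-bounded: `f n = n^{o(1)}`. -/
def QuasiBounded (f : ℕ → ℕ) : Prop :=
  ∀ ε : ℝ, 0 < ε → ∃ n₀ : ℕ, ∀ n : ℕ, n₀ ≤ n → (f n : ℝ) ≤ (n : ℝ) ^ ε

/-- `D ∈ Δ_k`: there is a uniform `d` such that from every graph of `D` one can delete
at most `k` vertices so that the remaining graph has maximum degree at most `d`. -/
def InDeltaK (D : GraphClass) (k : ℕ) : Prop :=
  ∃ d : ℕ, ∀ (V : Type), Finite V → ∀ G : SimpleGraph V, D V G →
    ∃ s : Set V, s.ncard ≤ k ∧ ∀ v ∉ s, ((G.neighborSet v) \ s).ncard ≤ d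

/-- Greedy extraction of `j` vertices of large "robust" degree from a graph that
cannot be made low-degree by deleting `k` vertices. -/
private lemma greedy_aux {V : Type} [Finite V] (G : SimpleGraph V) (k n : ℕ)
    (Q : ∀ s : Set V, s.ncard ≤ k → ∃ v ∉ s, n + k < (G.neighborSet v \ s).ncard) :
    ∀ j, j ≤ k + 1 → ∃ S : Finset V, S.card = j ∧
      ∀ v ∈ S, n + (k + 1 - j) ≤ (G.neighborSet v \ ↑S).ncard := by
  classical
  intro j
  induction j with
  | zero => intro _; exact ⟨∅, by simp, by simp⟩
  | succ j ih =>
    intro hj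
    obtain ⟨S, hScard, hSdeg⟩ := ih (by omega)
    obtain ⟨w, hw, hwdeg⟩ := Q ↑S (by rw [Set.ncard_coe_finset]; omega)
    have hwS : w ∉ S := by simpa using hw
    refine ⟨insert w S, by rw [Finset.card_insert_of_notMem hwS]; omega, ?_⟩
    intro v hv
    rcases Finset.mem_insert.mp hv with rfl | hvS
    · have heq : G.neighborSet v \ ↑(insert v S) = G.neighborSet v \ ↑S := by
        ext x
        simp only [Set.mem_diff, Finset.coe_insert, Set.mem_insert_iff,
          SimpleGraph.mem_neighborSet, Finset.mem_coe]
        constructor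
        · rintro ⟨ha, hb⟩; exact ⟨ha, fun hx => hb (Or.inr hx)⟩
        · rintro ⟨ha, hb⟩; exact ⟨ha, fun hx => hx.elim (fun he => ha.ne' he) hb⟩
      rw [heq]; omega
    · have h1 := hSdeg v hvS
      have heq : G.neighborSet v \ ↑(insert w S) = (G.neighborSet v \ ↑S) \ {w} := by
        ext x
        simp only [Set.mem_diff, Finset.coe_insert, Set.mem_insert_iff,
          Set.mem_singleton_iff, Finset.mem_coe]
        tauto
      have h2 := Set.ncard_le_ncard_diff_add_ncard (G.neighborSet v \ ↑S) {w}
        (Set.finite_singleton w)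
      rw [Set.ncard_singleton] at h2
      rw [heq]; omega

theorem statement11 (k : ℕ) (C : GraphClass) (hC : Hereditary C)
    (h : ∀ p : ℕ, 0 < p → ∃ f : ℕ → ℕ, Monotone f ∧ QuasiBounded f ∧
      HasDecomp C {D | Hereditary D ∧ InDeltaK D k} f p) :
    InDeltaK C k := by
  classical
  by_contra hne
  obtain ⟨f, hfmono, hfqb, D, ⟨hDher, d, hDd⟩, hdecomp⟩ := h (2*k+2) (by omega)
  -- quasi-boundedness with ε = 1/2 gives (f m)² ≤ m eventually
  obtain ⟨n₀, hn₀⟩ := hfqb (1/2) (by norm_num)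
  have hfsq : ∀ m : ℕ, n₀ ≤ m → f m ^ 2 ≤ m := by
    intro m hm
    have h1 := hn₀ m hm
    have h2 : ((f m : ℝ)) ^ 2 ≤ ((m:ℝ) ^ ((1:ℝ)/2)) ^ 2 := by
      apply pow_le_pow_left₀ (by positivity) h1
    rw [← Real.rpow_natCast ((m:ℝ) ^ ((1:ℝ)/2)) 2, ← Real.rpow_mul (by positivity)] at h2
    norm_num at h2
    exact_mod_cast h2
  set A : ℕ := 2*(k+1)*(d+k+1)^2 with hA
  set n : ℕ := max n₀ A + 1 with hn
  have hAn : A < n := Nat.lt_succ_of_le (Nat.le_max_right _ _)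
  have hn0n : n₀ ≤ n := le_trans (Nat.le_max_left _ _) (Nat.le_succ _)
  have hn1 : 1 ≤ n := by omega
  set m : ℕ := (k+1)*(n+1) with hm
  have hnm : n ≤ m := le_trans (Nat.le_succ n) (Nat.le_mul_of_pos_left _ (by omega))
  have hfm : f m * (d+k+1) < n := by
    have h1 : f m ^ 2 ≤ m := hfsq m (le_trans hn0n hnm)
    have h2 : (f m * (d+k+1))^2 < n^2 := by
      have h3 : m ≤ 2*(k+1)*n := by rw [hm]; nlinarith
      calc (f m * (d+k+1))^2 = f m ^2 * (d+k+1)^2 := by ring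
        _ ≤ (2*(k+1)*n) * (d+k+1)^2 := Nat.mul_le_mul_right _ (le_trans h1 h3)
        _ = A * n := by rw [hA]; ring
        _ < n * n := by
            have := Nat.mul_lt_mul_of_lt_of_le hAn (le_refl n) hn1
            omega
        _ = n^2 := by ring
    by_contra hc
    exact absurd h2 (not_lt.mpr (Nat.pow_le_pow_left (not_lt.mp hc) 2))
  -- use the negation of InDeltaK at threshold n + k
  rw [InDeltaK] at hne
  push_neg at hne
  obtain ⟨V, hVfin, G, hGC, hQ⟩ := hne (n + k)
  haveI := hVfin
  obtain ⟨S, hScard, hSdeg⟩ := greedy_aux G k n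
    (fun s hs => by
      obtain ⟨v, hv1, hv2⟩ := hQ s hs
      exact ⟨v, hv1, hv2⟩) (k+1) le_rfl
  have hSdeg' : ∀ v ∈ S, n ≤ (G.neighborSet v \ ↑S).ncard := by
    intro v hv; have := hSdeg v hv; omega
  -- choose n neighbors for each vertex of S
  have hTex : ∀ v : V, ∃ Tv : Finset V,
      v ∈ S → ((Tv : Set V) ⊆ G.neighborSet v \ ↑S ∧ Tv.card = n) := by
    intro v
    by_cases hv : v ∈ S
    · have hfin : (G.neighborSet v \ ↑S).Finite := Set.toFinite _
      have hcard : n ≤ hfin.toFinset.card := by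
        rw [← Set.ncard_eq_toFinset_card _ hfin]
        exact hSdeg' v hv
      obtain ⟨Tv, hsub, hTcard⟩ := Finset.exists_subset_card_eq hcard
      refine ⟨Tv, fun _ => ⟨?_, hTcard⟩⟩
      intro x hx
      exact hfin.mem_toFinset.mp (hsub hx)
    · exact ⟨∅, fun hvs => absurd hvs hv⟩
  choose T hT using hTex
  set W : Finset V := S ∪ S.biUnion T with hWdef
  have hWcard : W.card ≤ m := by
    have h1 : (S.biUnion T).card ≤ ∑ a ∈ S, (T a).card := Finset.card_biUnion_le
    have h2 : ∑ a ∈ S, (T a).card = S.card * n := by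
      rw [Finset.sum_congr rfl (fun a ha => (hT a ha).2), Finset.sum_const, smul_eq_mul]
    have h3 : W.card ≤ S.card + (S.biUnion T).card := Finset.card_union_le _ _
    rw [hScard] at h2
    rw [hm]
    have : (k+1) + (k+1)*n = (k+1)*(n+1) := by ring
    omega
  have hmemW : ∀ v ∈ S, (v : V) ∈ (↑W : Set V) :=
    fun v hv => Finset.mem_coe.mpr (Finset.mem_union_left _ hv)
  have hmemWT : ∀ v ∈ S, ∀ w ∈ T v, (w : V) ∈ (↑W : Set V) := by
    intro v hv w hw
    exact Finset.mem_coe.mpr (Finset.mem_union_right _ (Finset.mem_biUnion.mpr ⟨v, hv, hw⟩))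
  have hCW : C ↥(↑W : Set V) (G.induce ↑W) := hC V G ↑W hGC
  obtain ⟨N, hNle, c, hc⟩ := hdecomp ↥(↑W : Set V) inferInstance (G.induce ↑W) hCW
  have hNm : N ≤ f m := by
    refine le_trans hNle (hfmono ?_)
    rw [Nat.card_coe_set_eq, Set.ncard_coe_finset]
    exact hWcard
  have hSne : ∃ v, v ∈ S := Finset.card_pos.mp (by omega)
  have hNpos : 0 < N := by
    obtain ⟨v0, hv0⟩ := hSne
    exact (c ⟨v0, hmemW v0 hv0⟩).pos
  -- extended coloring on all of V
  set cc : V → Fin N := fun v => if h : v ∈ (↑W : Set V) then c ⟨v, h⟩ else ⟨0, hNpos⟩ with hcc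
  have hccW : ∀ (v : V) (hv : v ∈ (↑W : Set V)), cc v = c ⟨v, hv⟩ := by
    intro v hv; simp only [hcc, dif_pos hv]
  -- pigeonhole: a popular color among chosen neighbors
  have hfib : ∀ v : V, ∃ i : Fin N, v ∈ S →
      d + k < ((T v).filter (fun w => cc w = i)).card := by
    intro v
    by_cases hv : v ∈ S
    · have hmaps : ∀ a ∈ T v, cc a ∈ (Finset.univ : Finset (Fin N)) :=
        fun a _ => Finset.mem_univ _
      have hlt : (Finset.univ : Finset (Fin N)).card * (d+k) < (T v).card := by
        rw [Finset.card_univ, Fintype.card_fin, (hT v hv).2]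
        have h1 : N * (d+k+1) ≤ f m * (d+k+1) := Nat.mul_le_mul_right _ hNm
        nlinarith
      obtain ⟨i, _, hi⟩ := Finset.exists_lt_card_fiber_of_mul_lt_card_of_maps_to hmaps hlt
      exact ⟨i, fun _ => hi⟩
    · exact ⟨⟨0, hNpos⟩, fun hvs => absurd hvs hv⟩
  choose col hcol using hfib
  set I : Finset (Fin N) := S.image cc ∪ S.image col with hI
  have hIcard : I.card ≤ 2*k+2 := by
    calc I.card ≤ (S.image cc).card + (S.image col).card := Finset.card_union_le _ _
      _ ≤ S.card + S.card := Nat.add_le_add Finset.card_image_le Finset.card_image_le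
      _ ≤ 2*k+2 := by omega
  have hD2 := hc I hIcard
  obtain ⟨s, hscard, hsdeg⟩ := hDd _ inferInstance _ hD2
  -- project the deleted set to V and find a surviving high-degree vertex of S
  set π : ↥{x : ↥(↑W : Set V) | c x ∈ I} → V := fun y => ((y : ↥(↑W : Set V)) : V) with hπ
  have hπinj : Function.Injective π :=
    Subtype.val_injective.comp Subtype.val_injective
  set sV : Set V := π '' s with hsV
  have hsVcard : sV.ncard ≤ k :=
    le_trans (Set.ncard_image_le (Set.toFinite s)) hscard
  have hnotsub : ¬ (↑S : Set V) ⊆ sV := by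
    intro hsub
    have := Set.ncard_le_ncard hsub (Set.toFinite sV)
    rw [Set.ncard_coe_finset] at this
    omega
  obtain ⟨v, hvS', hvns⟩ := Set.not_subset.mp hnotsub
  have hvS : v ∈ S := hvS'
  have hccv : c ⟨v, hmemW v hvS⟩ ∈ I := by
    rw [← hccW v (hmemW v hvS)]
    exact Finset.mem_union_left _ (Finset.mem_image_of_mem cc hvS)
  set x : ↥{x : ↥(↑W : Set V) | c x ∈ I} := ⟨⟨v, hmemW v hvS⟩, hccv⟩ with hx
  have hxs : x ∉ s := fun hxmem => hvns ⟨x, hxmem, rfl⟩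
  have hdeg := hsdeg x hxs
  -- the popular-color neighbors of v give a large fiber inside the induced graph
  set F : Finset V := (T v).filter (fun w => cc w = col v) with hF
  have hFcard : d + k < F.card := hcol v hvS
  set NF : Set ↥{x : ↥(↑W : Set V) | c x ∈ I} := π ⁻¹' ↑F with hNF
  have himg : π '' NF = ↑F := by
    apply Set.Subset.antisymm
    · rintro w ⟨y, hy, rfl⟩; exact hy
    · intro w hw
      have hwT : w ∈ T v := Finset.mem_filter.mp hw |>.1
      have hwc : cc w = col v := Finset.mem_filter.mp hw |>.2
      have hwW : w ∈ (↑W : Set V) := hmemWT v hvS w hwT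
      have hwI : c ⟨w, hwW⟩ ∈ I := by
        rw [← hccW w hwW, hwc]
        exact Finset.mem_union_right _ (Finset.mem_image_of_mem col hvS)
      exact ⟨⟨⟨w, hwW⟩, hwI⟩, hw, rfl⟩
  have hNFcard : NF.ncard = F.card := by
    rw [← Set.ncard_coe_finset, ← himg, Set.ncard_image_of_injective _ hπinj]
  have hNFsub : NF ⊆ ((G.induce ↑W).induce {x : ↥(↑W : Set V) | c x ∈ I}).neighborSet x := by
    intro y hy
    have hyF : π y ∈ F := hy
    have hyT : π y ∈ T v := Finset.mem_filter.mp hyF |>.1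
    have hadj : G.Adj v (π y) := ((hT v hvS).1 hyT).1
    have hne2 : v ≠ π y := hadj.ne
    exact hadj
  have h2 := Set.ncard_le_ncard_diff_add_ncard NF s (Set.toFinite s)
  have h3 : (NF \ s).ncard ≤
      ((((G.induce ↑W).induce {x : ↥(↑W : Set V) | c x ∈ I}).neighborSet x) \ s).ncard :=
    Set.ncard_le_ncard (Set.diff_subset_diff_left hNFsub) (Set.toFinite _)
  omega
end
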